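/- Let μ be a distribution over [q]^E satisfying the conditional independence property for the line graph of G = (V,E). For any f : Ω(μ) → ℝ and S₁, S₂ ⊆ E with ∂S₁ ∩ S₂ = ∅, one has E_μ[Var_{S₁}[μ_{S₂}[f]]] ≤ E_μ[Var_{S₁}[μ_{S₁∩S₂}[f]]]. -/

import Mathlib

/-!
Write `μ_S` for `cExp μ · S`. It is a self-adjoint projection of `L²(μ)`, so
`E[Var_S h] = E[(h - μ_S h)²] = E[h²] - E[(μ_S h)²]`, and in particular `μ_S` is an
`L²`-contraction. Since `∂S₁ ∩ S₂ = ∅`, every walk of the line graph from `S₁ \ S₂` to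
`S₂ \ S₁` leaves `S₁` through a vertex outside `S₁ ∪ S₂`, so conditional independence gives
`μ_{S₁} μ_{S₂} = μ_{S₁ ∪ S₂} = μ_{S₂} μ_{S₁}` on the support of `μ`. With `g = μ_{S₁ ∩ S₂} f`
we have `μ_{S₂} f = μ_{S₂} g`, hence
`E[Var_{S₁} μ_{S₂} g] = E[(μ_{S₂} (g - μ_{S₁} g))²] ≤ E[(g - μ_{S₁} g)²] = E[Var_{S₁} g]`.
-/

open scoped Classical

/-- Expectation of `f` under a weight function `μ`. -/
noncomputable def expct {α : Type*} [Fintype α] (μ f : α → ℝ) : ℝ := ∑ x, μ x * f x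

/-- Conditional expectation of `f` under `μ`, resampling the coordinates in `S`
given that the coordinates outside `S` are fixed to those of `σ`. -/
noncomputable def cExp {ι : Type*} [Fintype ι] [DecidableEq ι] {q : ℕ}
    (μ : (ι → Fin q) → ℝ) (f : (ι → Fin q) → ℝ) (S : Finset ι) (σ : ι → Fin q) : ℝ :=
  (∑ τ, if ∀ i ∉ S, τ i = σ i then μ τ * f τ else 0) /
    (∑ τ, if ∀ i ∉ S, τ i = σ i then μ τ else 0)

/-- Conditional variance of `f` on `S` given the configuration `σ` outside `S`. -/
noncomputable def cVar {ι : Type*} [Fintype ι] [DecidableEq ι] {q : ℕ}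
    (μ : (ι → Fin q) → ℝ) (f : (ι → Fin q) → ℝ) (S : Finset ι) (σ : ι → Fin q) : ℝ :=
  cExp μ (fun τ => f τ ^ 2) S σ - (cExp μ f S σ) ^ 2

/-- The line graph of `G`: vertices are the edges of `G`, two distinct edges being
adjacent when they share an endpoint. -/
def lineG {V : Type*} [Fintype V] [DecidableEq V] (G : SimpleGraph V) [DecidableRel G.Adj] :
    SimpleGraph ↥G.edgeFinset :=
  SimpleGraph.fromRel (fun e e' => ∃ v, v ∈ (e : Sym2 V) ∧ v ∈ (e' : Sym2 V))

open Finset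

section Expectation

variable {α : Type*} [Fintype α] {μ : α → ℝ}

lemma expct_congr {f g : α → ℝ} (h : ∀ σ, μ σ ≠ 0 → f σ = g σ) :
    expct μ f = expct μ g := by
  refine sum_congr rfl fun σ _ => ?_
  by_cases hσ : μ σ = 0
  · simp [hσ]
  · rw [h σ hσ]

lemma expct_sub (f g : α → ℝ) :
    expct μ (fun σ => f σ - g σ) = expct μ f - expct μ g := by
  simp only [expct, mul_sub, sum_sub_distrib]

lemma expct_const_mul (c : ℝ) (f : α → ℝ) :
    expct μ (fun σ => c * f σ) = c * expct μ f := by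
  simp only [expct, mul_sum]
  exact sum_congr rfl fun _ _ => by ring

lemma expct_nonneg (hnn : ∀ σ, 0 ≤ μ σ) {f : α → ℝ} (hf : ∀ σ, 0 ≤ f σ) :
    0 ≤ expct μ f :=
  sum_nonneg fun σ _ => mul_nonneg (hnn σ) (hf σ)

lemma expct_ite_one (p : α → Prop) [DecidablePred p] :
    expct μ (fun τ => if p τ then 1 else 0) = ∑ τ, if p τ then μ τ else 0 := by
  simp only [expct, mul_ite, mul_one, mul_zero]

lemma sum_ite_congr {p p' : α → Prop} [DecidablePred p] [DecidablePred p']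
    (h : ∀ τ, p τ ↔ p' τ) :
    (∑ τ, if p τ then μ τ else 0) = ∑ τ, if p' τ then μ τ else 0 :=
  sum_congr rfl fun τ _ => if_congr (h τ) rfl rfl

end Expectation

section CondExp

variable {ι : Type*} [Fintype ι] [DecidableEq ι] {q : ℕ} {μ : (ι → Fin q) → ℝ}

noncomputable def fiberInd (S : Finset ι) (σ τ : ι → Fin q) : ℝ :=
  if ∀ i ∉ S, τ i = σ i then 1 else 0

lemma fiberInd_self (S : Finset ι) (σ : ι → Fin q) : fiberInd S σ σ = 1 :=
  if_pos fun _ _ => rfl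

lemma fiberInd_comm (S : Finset ι) (σ τ : ι → Fin q) : fiberInd S σ τ = fiberInd S τ σ := by
  unfold fiberInd
  simp_rw [eq_comm (a := τ _)]

lemma fiberInd_congr {S : Finset ι} {σ σ' : ι → Fin q} (h : ∀ i ∉ S, σ' i = σ i) :
    fiberInd S σ' = fiberInd S σ := by
  ext τ
  refine if_congr ⟨fun ht i hi => (ht i hi).trans (h i hi), fun ht i hi => ?_⟩ rfl rfl
  exact (ht i hi).trans (h i hi).symm

lemma expct_fiberInd_pos (hnn : ∀ σ, 0 ≤ μ σ) (S : Finset ι) {σ : ι → Fin q} (hσ : μ σ ≠ 0) :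
    0 < expct μ (fiberInd S σ) := by
  have hle : μ σ * fiberInd S σ σ ≤ expct μ (fiberInd S σ) :=
    single_le_sum (f := fun τ => μ τ * fiberInd S σ τ)
      (fun τ _ => mul_nonneg (hnn τ) (by unfold fiberInd; split_ifs <;> norm_num)) (mem_univ σ)
  rw [fiberInd_self, mul_one] at hle
  exact ((hnn σ).lt_of_ne' hσ).trans_le hle

lemma expct_fiberInd (S : Finset ι) (σ : ι → Fin q) :
    expct μ (fiberInd S σ) = ∑ τ, if ∀ i ∉ S, τ i = σ i then μ τ else 0 :=
  expct_ite_one _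

lemma expct_fiberInd_mul (S T : Finset ι) (σ ρ : ι → Fin q) :
    expct μ (fun τ => fiberInd S σ τ * fiberInd T ρ τ)
      = ∑ τ, if (∀ i ∉ S, τ i = σ i) ∧ (∀ i ∉ T, τ i = ρ i) then μ τ else 0 := by
  simp only [fiberInd, ite_zero_mul_ite_zero, mul_one]
  exact expct_ite_one _

lemma cExp_eq_div (f : (ι → Fin q) → ℝ) (S : Finset ι) (σ : ι → Fin q) :
    cExp μ f S σ = expct μ (fun τ => fiberInd S σ τ * f τ) / expct μ (fiberInd S σ) := by
  unfold cExp expct fiberInd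
  congr 1 <;> exact sum_congr rfl fun τ _ => by by_cases h : ∀ i ∉ S, τ i = σ i <;> simp [h]

lemma cExp_sub (f g : (ι → Fin q) → ℝ) (S : Finset ι) (σ : ι → Fin q) :
    cExp μ (fun τ => f τ - g τ) S σ = cExp μ f S σ - cExp μ g S σ := by
  simp only [cExp_eq_div, ← sub_div, ← expct_sub, mul_sub]

lemma cExp_eq_of_const_on_fiber (hnn : ∀ σ, 0 ≤ μ σ) {g : (ι → Fin q) → ℝ} {S : Finset ι}
    {ρ : ι → Fin q} (hρ : μ ρ ≠ 0) (hg : ∀ τ, (∀ i ∉ S, τ i = ρ i) → g τ = g ρ) :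
    cExp μ g S ρ = g ρ := by
  rw [cExp_eq_div, div_eq_iff (expct_fiberInd_pos hnn S hρ).ne', ← expct_const_mul]
  refine sum_congr rfl fun τ _ => ?_
  dsimp only
  unfold fiberInd
  by_cases h : ∀ i ∉ S, τ i = ρ i
  · rw [if_pos h, hg τ h]; ring
  · rw [if_neg h]; ring

lemma fiberInd_div_expct_comm (S : Finset ι) (σ τ : ι → Fin q) :
    fiberInd S σ τ / expct μ (fiberInd S σ) = fiberInd S τ σ / expct μ (fiberInd S τ) := by
  by_cases h : ∀ i ∉ S, τ i = σ i
  · rw [fiberInd_congr h, fiberInd_self, fiberInd, if_pos h]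
  · rw [fiberInd_comm S τ σ, show fiberInd S σ τ = 0 from if_neg h, zero_div, zero_div]

lemma expct_mul_cExp_eq_sum (w v : (ι → Fin q) → ℝ) (S : Finset ι) :
    expct μ (fun τ => w τ * cExp μ v S τ)
      = ∑ τ, ∑ ρ, μ τ * w τ * (μ ρ * v ρ) * (fiberInd S τ ρ / expct μ (fiberInd S τ)) := by
  refine sum_congr rfl fun τ _ => ?_
  dsimp only
  rw [cExp_eq_div, expct, sum_div, mul_sum, mul_sum]
  exact sum_congr rfl fun ρ _ => by ring

lemma expct_mul_cExp_comm (w v : (ι → Fin q) → ℝ) (S : Finset ι) :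
    expct μ (fun τ => w τ * cExp μ v S τ) = expct μ (fun τ => cExp μ w S τ * v τ) := by
  simp_rw [mul_comm (cExp μ w S _), expct_mul_cExp_eq_sum]
  rw [sum_comm]
  refine sum_congr rfl fun ρ _ => sum_congr rfl fun τ _ => ?_
  rw [fiberInd_div_expct_comm S τ ρ]
  ring

lemma expct_cExp (hnn : ∀ σ, 0 ≤ μ σ) (v : (ι → Fin q) → ℝ) (S : Finset ι) :
    expct μ (fun σ => cExp μ v S σ) = expct μ v := by
  have h := expct_mul_cExp_comm (μ := μ) (fun _ => 1) v S
  simp only [one_mul] at h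
  rw [h]
  exact expct_congr fun τ hτ => by
    rw [cExp_eq_of_const_on_fiber hnn hτ fun _ _ => rfl, one_mul]

lemma cExp_cExp_of_subset (hnn : ∀ σ, 0 ≤ μ σ) (f : (ι → Fin q) → ℝ) {A B : Finset ι}
    (hAB : A ⊆ B) (σ : ι → Fin q) :
    cExp μ (fun τ => cExp μ f A τ) B σ = cExp μ f B σ := by
  rw [cExp_eq_div, cExp_eq_div, expct_mul_cExp_comm]
  congr 1
  refine expct_congr fun ρ hρ => ?_
  rw [cExp_eq_of_const_on_fiber hnn hρ fun τ hτ => ?_]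
  rw [fiberInd_comm, fiberInd_congr fun i hi => hτ i fun h => hi (hAB h), fiberInd_comm]

lemma expct_sq_sub_cExp (hnn : ∀ σ, 0 ≤ μ σ) (u : (ι → Fin q) → ℝ) (S : Finset ι) :
    expct μ (fun σ => (u σ - cExp μ u S σ) ^ 2)
      = expct μ (fun σ => u σ ^ 2) - expct μ (fun σ => cExp μ u S σ ^ 2) := by
  have hcross : expct μ (fun σ => cExp μ u S σ * u σ)
      = expct μ (fun σ => cExp μ u S σ ^ 2) := by
    have h := expct_mul_cExp_comm (μ := μ) (fun σ => cExp μ u S σ) u S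
    simp only [cExp_cExp_of_subset hnn u subset_rfl] at h
    rw [← h]
    simp only [sq]
  have hexpand : expct μ (fun σ => (u σ - cExp μ u S σ) ^ 2)
      = expct μ (fun σ => u σ ^ 2) - 2 * expct μ (fun σ => cExp μ u S σ * u σ)
        + expct μ (fun σ => cExp μ u S σ ^ 2) := by
    simp only [expct, mul_sum, ← sum_sub_distrib, ← sum_add_distrib]
    exact sum_congr rfl fun _ _ => by ring
  rw [hexpand, hcross]
  ring

lemma expct_cVar (hnn : ∀ σ, 0 ≤ μ σ) (u : (ι → Fin q) → ℝ) (S : Finset ι) :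
    expct μ (fun σ => cVar μ u S σ) = expct μ (fun σ => (u σ - cExp μ u S σ) ^ 2) := by
  rw [expct_sq_sub_cExp hnn, ← expct_cExp hnn (fun σ => u σ ^ 2) S]
  exact expct_sub _ _

lemma expct_cExp_sq_le (hnn : ∀ σ, 0 ≤ μ σ) (u : (ι → Fin q) → ℝ) (S : Finset ι) :
    expct μ (fun σ => cExp μ u S σ ^ 2) ≤ expct μ (fun σ => u σ ^ 2) := by
  have h := expct_sq_sub_cExp hnn u S
  have h0 : 0 ≤ expct μ (fun σ => (u σ - cExp μ u S σ) ^ 2) :=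
    expct_nonneg hnn fun _ => sq_nonneg _
  linarith

theorem expct_cVar_cExp_le_of_comm (hnn : ∀ σ, 0 ≤ μ σ) {S₁ S₂ : Finset ι}
    (g : (ι → Fin q) → ℝ)
    (hcomm : ∀ σ, μ σ ≠ 0 →
      cExp μ (fun τ => cExp μ g S₂ τ) S₁ σ = cExp μ (fun τ => cExp μ g S₁ τ) S₂ σ) :
    expct μ (fun σ => cVar μ (fun τ => cExp μ g S₂ τ) S₁ σ)
      ≤ expct μ (fun σ => cVar μ g S₁ σ) := by
  rw [expct_cVar hnn, expct_cVar hnn]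
  calc _ = expct μ (fun σ => cExp μ (fun τ => g τ - cExp μ g S₁ τ) S₂ σ ^ 2) :=
        expct_congr fun σ hσ => by rw [hcomm σ hσ, cExp_sub]
    _ ≤ _ := expct_cExp_sq_le hnn _ S₂

end CondExp

section CondIndep

variable {ι : Type*} [Fintype ι] [DecidableEq ι] {q : ℕ} {μ : (ι → Fin q) → ℝ}

def CondIndep (μ : (ι → Fin q) → ℝ) (A B C : Finset ι) : Prop :=
  ∀ η : ι → Fin q,
    0 < (∑ τ, if ∀ i ∈ C, τ i = η i then μ τ else 0) →
    ∀ ζ : ι → Fin q,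
      (∑ τ, if (∀ i ∈ A ∪ B, τ i = ζ i) ∧ (∀ i ∈ C, τ i = η i) then μ τ else 0)
          / (∑ τ, if ∀ i ∈ C, τ i = η i then μ τ else 0)
        = ((∑ τ, if (∀ i ∈ A, τ i = ζ i) ∧ (∀ i ∈ C, τ i = η i) then μ τ else 0)
          / (∑ τ, if ∀ i ∈ C, τ i = η i then μ τ else 0))
        * ((∑ τ, if (∀ i ∈ B, τ i = ζ i) ∧ (∀ i ∈ C, τ i = η i) then μ τ else 0)
          / (∑ τ, if ∀ i ∈ C, τ i = η i then μ τ else 0))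

lemma CondIndep.symm {A B C : Finset ι} (h : CondIndep μ A B C) : CondIndep μ B A C := by
  intro η hη ζ
  rw [union_comm, mul_comm]
  exact h η hη ζ

lemma CondIndep.cExp_fiberInd (hnn : ∀ σ, 0 ≤ μ σ) {S₁ S₂ : Finset ι}
    (hCI : CondIndep μ (S₁ \ S₂) (S₂ \ S₁) (S₁ ∪ S₂)ᶜ) {σ ρ : ι → Fin q}
    (hσ : μ σ ≠ 0) (hρ : μ ρ ≠ 0) :
    cExp μ (fiberInd S₁ σ) S₂ ρ
      = expct μ (fiberInd S₁ σ) / expct μ (fiberInd (S₁ ∪ S₂) σ) * fiberInd (S₁ ∪ S₂) σ ρ := by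
  rw [cExp_eq_div]
  by_cases hD : ∀ i ∉ S₁ ∪ S₂, ρ i = σ i
  · have hW := expct_fiberInd_pos hnn (S₁ ∪ S₂) hσ
    have hZ := expct_fiberInd_pos hnn S₂ hρ
    have hWeq : expct μ (fiberInd (S₁ ∪ S₂) σ)
        = ∑ τ, if ∀ i ∈ (S₁ ∪ S₂)ᶜ, τ i = σ i then μ τ else 0 := by
      rw [expct_fiberInd]
      exact sum_ite_congr fun τ => by simp only [mem_compl]
    have key : expct μ (fun τ => fiberInd S₂ ρ τ * fiberInd S₁ σ τ)
          / expct μ (fiberInd (S₁ ∪ S₂) σ)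
        = expct μ (fiberInd S₂ ρ) / expct μ (fiberInd (S₁ ∪ S₂) σ)
          * (expct μ (fiberInd S₁ σ) / expct μ (fiberInd (S₁ ∪ S₂) σ)) := by
      -- with `ζ = ρ` on `S₁` and `σ` off it, the masses in `hCI` are those of the joint fiber,
      -- of the `S₂`-fiber of `ρ` and of the `S₁`-fiber of `σ`
      convert hCI σ (hWeq ▸ hW) (fun i => if i ∈ S₁ then ρ i else σ i) using 3 <;>
      · first | rw [expct_fiberInd_mul] | rw [expct_fiberInd]
        refine sum_ite_congr fun τ => ?_
        simp only [mem_union, mem_sdiff, mem_compl, not_or] at *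
        grind
    rw [show fiberInd (S₁ ∪ S₂) σ ρ = 1 from if_pos hD]
    field_simp at key ⊢
    linarith
  · have hK : expct μ (fun τ => fiberInd S₂ ρ τ * fiberInd S₁ σ τ) = 0 := by
      rw [expct_fiberInd_mul]
      refine sum_eq_zero fun τ _ => if_neg fun ⟨h₂, h₁⟩ => hD fun i hi => ?_
      simp only [mem_union, not_or] at hi
      exact (h₂ i hi.2).symm.trans (h₁ i hi.1)
    rw [hK, show fiberInd (S₁ ∪ S₂) σ ρ = 0 from if_neg hD, zero_div, mul_zero]

lemma CondIndep.cExp_cExp_eq_cExp_union (hnn : ∀ σ, 0 ≤ μ σ) {S₁ S₂ : Finset ι}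
    (hCI : CondIndep μ (S₁ \ S₂) (S₂ \ S₁) (S₁ ∪ S₂)ᶜ) (v : (ι → Fin q) → ℝ)
    {σ : ι → Fin q} (hσ : μ σ ≠ 0) :
    cExp μ (fun τ => cExp μ v S₂ τ) S₁ σ = cExp μ v (S₁ ∪ S₂) σ := by
  have hZ := expct_fiberInd_pos hnn S₁ hσ
  have hW := expct_fiberInd_pos hnn (S₁ ∪ S₂) hσ
  rw [cExp_eq_div, expct_mul_cExp_comm, cExp_eq_div,
    expct_congr fun ρ hρ => by rw [hCI.cExp_fiberInd hnn hσ hρ, mul_assoc], expct_const_mul]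
  field_simp

lemma CondIndep.cExp_comm (hnn : ∀ σ, 0 ≤ μ σ) {S₁ S₂ : Finset ι}
    (hCI : CondIndep μ (S₁ \ S₂) (S₂ \ S₁) (S₁ ∪ S₂)ᶜ) (v : (ι → Fin q) → ℝ)
    {σ : ι → Fin q} (hσ : μ σ ≠ 0) :
    cExp μ (fun τ => cExp μ v S₂ τ) S₁ σ = cExp μ (fun τ => cExp μ v S₁ τ) S₂ σ := by
  have hCI' : CondIndep μ (S₂ \ S₁) (S₁ \ S₂) (S₂ ∪ S₁)ᶜ := union_comm S₁ S₂ ▸ hCI.symm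
  rw [hCI.cExp_cExp_eq_cExp_union hnn v hσ, hCI'.cExp_cExp_eq_cExp_union hnn v hσ, union_comm]

end CondIndep

lemma SimpleGraph.Walk.exists_mem_support_compl_union {α : Type*} [Fintype α] [DecidableEq α]
    {H : SimpleGraph α} {S₁ S₂ : Finset α}
    (hbd : ∀ e, (e ∉ S₁ ∧ ∃ h ∈ S₁, H.Adj e h) → e ∉ S₂) {a b : α} (w : H.Walk a b)
    (ha : a ∈ S₁) (hb : b ∉ S₁) : ∃ c ∈ (S₁ ∪ S₂)ᶜ, c ∈ w.support := by
  obtain ⟨d, hd, hfst, hsnd⟩ := w.exists_boundary_dart (S₁ : Set α) ha hb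
  have h₂ := hbd d.snd ⟨hsnd, d.fst, hfst, d.adj.symm⟩
  exact ⟨d.snd, by simp_all, w.dart_snd_mem_support_of_mem_darts hd⟩

theorem statement12_general {V : Type*} [Fintype V] [DecidableEq V]
    (G : SimpleGraph V) [DecidableRel G.Adj] (q : ℕ)
    (μ : (↥G.edgeFinset → Fin q) → ℝ)
    (hnn : ∀ σ, 0 ≤ μ σ)
    (hCI : ∀ A B C : Finset ↥G.edgeFinset,
      Disjoint A B → Disjoint A C → Disjoint B C →
      (∀ a ∈ A, ∀ b ∈ B, ∀ w : (lineG G).Walk a b, ∃ c ∈ C, c ∈ w.support) →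
      ∀ η : ↥G.edgeFinset → Fin q,
        0 < (∑ τ, if ∀ i ∈ C, τ i = η i then μ τ else 0) →
        ∀ ζ : ↥G.edgeFinset → Fin q,
          (∑ τ, if (∀ i ∈ A ∪ B, τ i = ζ i) ∧ (∀ i ∈ C, τ i = η i) then μ τ else 0)
              / (∑ τ, if ∀ i ∈ C, τ i = η i then μ τ else 0)
            = ((∑ τ, if (∀ i ∈ A, τ i = ζ i) ∧ (∀ i ∈ C, τ i = η i) then μ τ else 0)
              / (∑ τ, if ∀ i ∈ C, τ i = η i then μ τ else 0))
            * ((∑ τ, if (∀ i ∈ B, τ i = ζ i) ∧ (∀ i ∈ C, τ i = η i) then μ τ else 0)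
              / (∑ τ, if ∀ i ∈ C, τ i = η i then μ τ else 0)))
    (S₁ S₂ : Finset ↥G.edgeFinset)
    (hbd : ∀ e, (e ∉ S₁ ∧ ∃ h ∈ S₁, (lineG G).Adj e h) → e ∉ S₂)
    (f : (↥G.edgeFinset → Fin q) → ℝ) :
    expct μ (fun σ => cVar μ (fun τ => cExp μ f S₂ τ) S₁ σ)
      ≤ expct μ (fun σ => cVar μ (fun τ => cExp μ f (S₁ ∩ S₂) τ) S₁ σ) := by
  have hsub : S₁ \ S₂ ∪ S₂ \ S₁ ⊆ S₁ ∪ S₂ := union_subset_union sdiff_subset sdiff_subset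
  have hS : CondIndep μ (S₁ \ S₂) (S₂ \ S₁) (S₁ ∪ S₂)ᶜ :=
    hCI _ _ _ disjoint_sdiff_sdiff
      (disjoint_compl_right.mono_left (subset_union_left.trans hsub))
      (disjoint_compl_right.mono_left (subset_union_right.trans hsub))
      fun a ha b hb w => w.exists_mem_support_compl_union hbd (mem_sdiff.1 ha).1 (mem_sdiff.1 hb).2
  have htower : (fun τ => cExp μ f S₂ τ)
      = fun τ => cExp μ (fun ρ => cExp μ f (S₁ ∩ S₂) ρ) S₂ τ :=
    funext fun τ => (cExp_cExp_of_subset hnn f inter_subset_right τ).symm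
  rw [htower]
  exact expct_cVar_cExp_le_of_comm hnn _ fun σ hσ => hS.cExp_comm hnn _ hσ

/-- If `μ` is a distribution over `[q]^E` satisfying the conditional independence property
for the line graph of `G`, then for any `S₁, S₂ ⊆ E` with `∂S₁ ∩ S₂ = ∅`,
`E_μ[Var_{S₁}[μ_{S₂}[f]]] ≤ E_μ[Var_{S₁}[μ_{S₁∩S₂}[f]]]`. -/
theorem statement12 {V : Type*} [Fintype V] [DecidableEq V]
    (G : SimpleGraph V) [DecidableRel G.Adj] (q : ℕ)
    (μ : (↥G.edgeFinset → Fin q) → ℝ)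
    (hnn : ∀ σ, 0 ≤ μ σ) (hsum : ∑ σ, μ σ = 1)
    (hCI : ∀ A B C : Finset ↥G.edgeFinset,
      Disjoint A B → Disjoint A C → Disjoint B C →
      (∀ a ∈ A, ∀ b ∈ B, ∀ w : (lineG G).Walk a b, ∃ c ∈ C, c ∈ w.support) →
      ∀ η : ↥G.edgeFinset → Fin q,
        0 < (∑ τ, if ∀ i ∈ C, τ i = η i then μ τ else 0) →
        ∀ ζ : ↥G.edgeFinset → Fin q,
          (∑ τ, if (∀ i ∈ A ∪ B, τ i = ζ i) ∧ (∀ i ∈ C, τ i = η i) then μ τ else 0)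
              / (∑ τ, if ∀ i ∈ C, τ i = η i then μ τ else 0)
            = ((∑ τ, if (∀ i ∈ A, τ i = ζ i) ∧ (∀ i ∈ C, τ i = η i) then μ τ else 0)
              / (∑ τ, if ∀ i ∈ C, τ i = η i then μ τ else 0))
            * ((∑ τ, if (∀ i ∈ B, τ i = ζ i) ∧ (∀ i ∈ C, τ i = η i) then μ τ else 0)
              / (∑ τ, if ∀ i ∈ C, τ i = η i then μ τ else 0)))
    (S₁ S₂ : Finset ↥G.edgeFinset)
    (hbd : ∀ e, (e ∉ S₁ ∧ ∃ h ∈ S₁, (lineG G).Adj e h) → e ∉ S₂)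
    (f : (↥G.edgeFinset → Fin q) → ℝ) :
    expct μ (fun σ => cVar μ (fun τ => cExp μ f S₂ τ) S₁ σ)
      ≤ expct μ (fun σ => cVar μ (fun τ => cExp μ f (S₁ ∩ S₂) τ) S₁ σ) :=
  statement12_general G q μ hnn hCI S₁ S₂ hbd f
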